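/- arXiv:1810.03773 — 2 statements merged into one kernel-verified Lean document; each statement's English description precedes it below -/
import Mathlib

section
/- Let 0 ≤ γ < √5 and let ‖·‖ be the Euclidean norm on ℝ². For every β = (β₁, β₂) ∈ ℝ² satisfying 10·β₁ ≥ 1 + γ‖β‖ and β₁ + 2·β₂ ≥ 1 + γ‖β‖, one has ‖β‖ ≥ 1/(√5 − γ), with equality if and only if β = (√5/(√5 − γ))·(1/5, 2/5). In particular, the unique minimum-norm element of this constraint set is (√5/(√5 − γ))·(1/5, 2/5), a positive scalar multiple of (1/5, 2/5). -/
/-!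
By Cauchy–Schwarz, the second constraint gives `1 + γ‖β‖ ≤ ⟪(1, 2), β⟫ ≤ √5 ‖β‖`, hence
`‖β‖ ≥ 1/(√5 − γ)`. Equality forces equality in
Cauchy–Schwarz, so `β` is a nonnegative multiple of `(1, 2)`, and its norm fixes the multiple.
-/

open RealInnerProductSpace

/-- The adversarial margin constraint `y xᵀβ − γ‖β‖ ≥ 1`, with the label absorbed into `x`. -/
def RobustMarginAt {E : Type*} [NormedAddCommGroup E] [InnerProductSpace ℝ E]
    (γ : ℝ) (x β : E) : Prop :=
  1 + γ * ‖β‖ ≤ ⟪x, β⟫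

namespace RobustMarginAt

variable {E : Type*} [NormedAddCommGroup E] [InnerProductSpace ℝ E] {γ : ℝ} {x β : E}

theorem one_le_sub_mul_norm (h : RobustMarginAt γ x β) : 1 ≤ (‖x‖ - γ) * ‖β‖ := by
  have := real_inner_le_norm x β
  unfold RobustMarginAt at h
  linarith

theorem sub_pos (h : RobustMarginAt γ x β) : 0 < ‖x‖ - γ :=
  pos_of_mul_pos_left (one_pos.trans_le h.one_le_sub_mul_norm) (norm_nonneg β)

theorem inv_le_norm (h : RobustMarginAt γ x β) : (‖x‖ - γ)⁻¹ ≤ ‖β‖ :=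
  (inv_le_iff_one_le_mul₀' h.sub_pos).2 h.one_le_sub_mul_norm

theorem norm_eq_inv_iff (h : RobustMarginAt γ x β) (hx : x ≠ 0) :
    ‖β‖ = (‖x‖ - γ)⁻¹ ↔ β = (‖x‖ * (‖x‖ - γ))⁻¹ • x := by
  have hc := h.sub_pos
  have hx' : 0 < ‖x‖ := norm_pos_iff.2 hx
  constructor
  · intro hβ
    have hcs : ⟪x, β⟫ = ‖x‖ * ‖β‖ := by
      have := real_inner_le_norm x β
      unfold RobustMarginAt at h
      rw [hβ] at h this ⊢
      field_simp at h this ⊢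
      linarith
    have hsmul := inner_eq_norm_mul_iff_real.1 hcs
    rw [hβ] at hsmul
    rw [mul_inv, mul_smul, eq_inv_smul_iff₀ hx'.ne', hsmul]
  · rintro rfl
    rw [norm_smul, Real.norm_of_nonneg (by positivity)]
    field_simp

end RobustMarginAt

theorem adv_svm_minimizer_general (γ : ℝ)
    (β : EuclideanSpace ℝ (Fin 2))
    (h2 : β 0 + 2 * β 1 ≥ 1 + γ * ‖β‖) :
    ‖β‖ ≥ 1 / (Real.sqrt 5 - γ) ∧
      (‖β‖ = 1 / (Real.sqrt 5 - γ) ↔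
        β = (Real.sqrt 5 / (Real.sqrt 5 - γ)) •
          (WithLp.equiv 2 (Fin 2 → ℝ)).symm ![1 / 5, 2 / 5]) := by
  set w : EuclideanSpace ℝ (Fin 2) := !₂[1, 2]
  have hw : ‖w‖ = Real.sqrt 5 := by
    norm_num [w, EuclideanSpace.norm_eq, Fin.sum_univ_two]
  have hm : RobustMarginAt γ w β := by
    have : ⟪w, β⟫ = β 0 + 2 * β 1 := by
      simp [w, PiLp.inner_apply, Fin.sum_univ_two, mul_comm]
    rwa [RobustMarginAt, this]
  have hc : Real.sqrt 5 - γ ≠ 0 := hw ▸ hm.sub_pos.ne'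
  have hvec : (Real.sqrt 5 / (Real.sqrt 5 - γ)) • (WithLp.equiv 2 (Fin 2 → ℝ)).symm ![1 / 5, 2 / 5]
      = (Real.sqrt 5 * (Real.sqrt 5 - γ))⁻¹ • w := by
    have h5 : Real.sqrt 5 ^ 2 = 5 := Real.sq_sqrt (by norm_num)
    ext i
    fin_cases i <;>
      simp only [w, WithLp.equiv_symm_apply, PiLp.smul_apply, smul_eq_mul, Fin.zero_eta,
        Fin.mk_one, Matrix.cons_val_zero, Matrix.cons_val_one, Matrix.cons_val_fin_one] <;>
      field_simp <;> linear_combination h5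
  rw [one_div, hvec, ← hw]
  exact ⟨hm.inv_le_norm, hm.norm_eq_inv_iff (by simp [w])⟩

/-- for `0 ≤ γ < √5`, over the adversarially trained SVM constraints
`10β₁ ≥ 1 + γ‖β‖` and `β₁ + 2β₂ ≥ 1 + γ‖β‖` (Euclidean norm on ℝ²), one has
`‖β‖ ≥ 1/(√5 − γ)`, with equality iff `β = (√5/(√5 − γ))·(1/5, 2/5)`. -/
theorem adv_svm_minimizer (γ : ℝ) (hγ0 : 0 ≤ γ) (hγ : γ < Real.sqrt 5)
    (β : EuclideanSpace ℝ (Fin 2))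
    (h1 : 10 * β 0 ≥ 1 + γ * ‖β‖) (h2 : β 0 + 2 * β 1 ≥ 1 + γ * ‖β‖) :
    ‖β‖ ≥ 1 / (Real.sqrt 5 - γ) ∧
      (‖β‖ = 1 / (Real.sqrt 5 - γ) ↔
        β = (Real.sqrt 5 / (Real.sqrt 5 - γ)) •
          (WithLp.equiv 2 (Fin 2 → ℝ)).symm ![1 / 5, 2 / 5]) :=
  adv_svm_minimizer_general γ β h2
end

section
/- Let D be the probability measure on ℝ² × {−1, +1} assigning probability 1/4 to ((10,0), +1), probability 1/4 to ((−10,0), −1), and probability 1/8 to each of ((1,2), +1), ((1,−2), +1), ((−1,−2), −1), ((−1,2), −1). Then for every β ∈ ℝ² and every e ≥ 0, E_{(x,y)∼D}[ 𝟙( ∃ δ ∈ ℝ², ‖δ‖ ≤ e and y·⟨x + δ, β⟩ ≤ 0 ) ] = L(β, e), where L(β, e) = (1/2)·𝟙(10β₁ ≤ e‖β‖) + (1/4)·𝟙(β₁ + 2β₂ ≤ e‖β‖) + (1/4)·𝟙(β₁ − 2β₂ ≤ e‖β‖). -/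
/-! A budget-`e` perturbation can lower `⟪x, v⟫` by at most `e‖v‖` (Cauchy–Schwarz), and
moving by `e` against `v` achieves exactly that. So the point `(x, y)` is adversarially
misclassified by `β` iff `y⟪x, β⟫ ≤ e‖β‖` (as `|y| = 1`). Integrating against the six atoms of
`D`, each negative atom is the reflection of a positive one and yields the same condition. -/

open MeasureTheory RealInnerProductSpace
open scoped Classical

/-- The adversarial error function
`L(β, e) = (1/2)·𝟙(10β₁ ≤ e‖β‖) + (1/4)·𝟙(β₁ + 2β₂ ≤ e‖β‖) + (1/4)·𝟙(β₁ − 2β₂ ≤ e‖β‖)`,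
where `‖·‖` is the Euclidean norm on `ℝ²`. -/
noncomputable def advErr (β : EuclideanSpace ℝ (Fin 2)) (e : ℝ) : ℝ :=
  (1 / 2) * (if 10 * β 0 ≤ e * ‖β‖ then 1 else 0) +
    (1 / 4) * (if β 0 + 2 * β 1 ≤ e * ‖β‖ then 1 else 0) +
    (1 / 4) * (if β 0 - 2 * β 1 ≤ e * ‖β‖ then 1 else 0)

/-- The point `(a, b)` of `ℝ²` with the Euclidean norm. -/
noncomputable def pt (a b : ℝ) : EuclideanSpace ℝ (Fin 2) :=
  (WithLp.equiv 2 (Fin 2 → ℝ)).symm ![a, b]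

/-- The test distribution of the paper's Proposition: mass 1/4 at `((10,0), +1)` and
`((−10,0), −1)`, and mass 1/8 at each of `((1,2), +1)`, `((1,−2), +1)`,
`((−1,−2), −1)`, `((−1,2), −1)`. -/
noncomputable def D : Measure (EuclideanSpace ℝ (Fin 2) × ℝ) :=
  (1 / 4 : ENNReal) • Measure.dirac (pt 10 0, 1) +
    (1 / 4 : ENNReal) • Measure.dirac (pt (-10) 0, -1) +
    (1 / 8 : ENNReal) • Measure.dirac (pt 1 2, 1) +
    (1 / 8 : ENNReal) • Measure.dirac (pt 1 (-2), 1) +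
    (1 / 8 : ENNReal) • Measure.dirac (pt (-1) (-2), -1) +
    (1 / 8 : ENNReal) • Measure.dirac (pt (-1) 2, -1)

section InnerProductSpace

variable {E : Type*} [NormedAddCommGroup E] [InnerProductSpace ℝ E]

lemma exists_norm_le_inner_eq_neg_mul_norm (v : E) {e : ℝ} (he : 0 ≤ e) :
    ∃ δ : E, ‖δ‖ ≤ e ∧ ⟪δ, v⟫ = -(e * ‖v‖) := by
  rcases eq_or_ne v 0 with rfl | hv
  · exact ⟨0, by simpa using he, by simp⟩
  have hv' : 0 < ‖v‖ := norm_pos_iff.2 hv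
  refine ⟨-(e / ‖v‖) • v, ?_, ?_⟩
  · rw [norm_smul, norm_neg, Real.norm_of_nonneg (by positivity), div_mul_cancel₀ _ hv'.ne']
  · rw [real_inner_smul_left, real_inner_self_eq_norm_sq]
    field_simp

lemma exists_norm_le_inner_add_nonpos_iff (x v : E) {e : ℝ} (he : 0 ≤ e) :
    (∃ δ : E, ‖δ‖ ≤ e ∧ ⟪x + δ, v⟫ ≤ 0) ↔ ⟪x, v⟫ ≤ e * ‖v‖ := by
  constructor
  · rintro ⟨δ, hδ, hneg⟩
    have hδv : -⟪δ, v⟫ ≤ e * ‖v‖ :=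
      calc -⟪δ, v⟫ ≤ ‖δ‖ * ‖v‖ := (neg_le_abs _).trans (abs_real_inner_le_norm δ v)
        _ ≤ e * ‖v‖ := by gcongr
    rw [inner_add_left] at hneg
    linarith
  · intro h
    obtain ⟨δ, hδ, hδv⟩ := exists_norm_le_inner_eq_neg_mul_norm v he
    exact ⟨δ, hδ, by rw [inner_add_left, hδv]; linarith⟩

lemma exists_norm_le_mul_inner_add_nonpos_iff (x v : E) (y : ℝ) {e : ℝ} (he : 0 ≤ e) :
    (∃ δ : E, ‖δ‖ ≤ e ∧ y * ⟪x + δ, v⟫ ≤ 0) ↔ y * ⟪x, v⟫ ≤ |y| * (e * ‖v‖) := by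
  simpa [real_inner_smul_right, norm_smul, mul_left_comm] using
    exists_norm_le_inner_add_nonpos_iff x (y • v) he

end InnerProductSpace

lemma inner_pt (a b : ℝ) (β : EuclideanSpace ℝ (Fin 2)) : ⟪pt a b, β⟫ = a * β 0 + b * β 1 := by
  simp [pt, PiLp.inner_apply, Fin.sum_univ_two, mul_comm]

lemma integral_D (f : EuclideanSpace ℝ (Fin 2) × ℝ → ℝ) :
    ∫ p, f p ∂D = 1 / 4 * f (pt 10 0, 1) + 1 / 4 * f (pt (-10) 0, -1) + 1 / 8 * f (pt 1 2, 1) +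
      1 / 8 * f (pt 1 (-2), 1) + 1 / 8 * f (pt (-1) (-2), -1) + 1 / 8 * f (pt (-1) 2, -1) := by
  have hint : ∀ (c : ENNReal) a, c ≠ ⊤ → Integrable f (c • Measure.dirac a) :=
    fun c a hc => (integrable_dirac (by simp)).smul_measure hc
  simp [D, integral_add_measure, integrable_add_measure, hint]

/-- the expected adversarial classification error under `D` of the
linear classifier `h(x) = ⟨x, β⟩` with budget `e` equals `L(β, e)`. -/
theorem expected_adv_error_eq (β : EuclideanSpace ℝ (Fin 2)) (e : ℝ) (he : 0 ≤ e) :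
    (∫ p : EuclideanSpace ℝ (Fin 2) × ℝ,
        (if ∃ δ : EuclideanSpace ℝ (Fin 2), ‖δ‖ ≤ e ∧ p.2 * ⟪p.1 + δ, β⟫ ≤ 0
          then (1 : ℝ) else 0) ∂D) = advErr β e := by
  simp only [exists_norm_le_mul_inner_add_nonpos_iff _ _ _ he, integral_D, inner_pt, abs_one,
    abs_neg]
  rw [advErr]
  ring_nf
end
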